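/- arXiv:2306.12827 — 2 statements merged into one kernel-verified Lean document; each statement's English description precedes it below -/
import Mathlib

section
/- For every ε in (0,1], the integral ∫₀^π (cosh r − sinh r · cos θ)^{−(1/2−ε)} dθ is at most C·ε^{−1}·e^{−(1/2−ε)r} for all r ≥ 0, for some absolute constant C > 0. -/
/-! The half-angle formulas give `cosh r - sinh r * cos θ = eʳ sin²(θ/2) + e⁻ʳ cos²(θ/2)`, which
lies between `eʳ (θ/π)²` (Jordan's inequality `sin x ≥ 2x/π` on `[0, π/2]`) and `eʳ` (for `r ≥ 0`).
For `s = 1/2 - ε ≥ 0` the lower bound gives the integrable majorant `e^{-sr} (θ/π)^{-2s}`, with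
integral `π / (1 - 2s) = π / (2ε)`; for `s ≤ 0` the upper bound gives `π e^{-sr}`. So `C = π` works. -/

open Real intervalIntegral

theorem cosh_sub_sinh_mul_cos_eq (r θ : ℝ) :
    cosh r - sinh r * cos θ = exp r * sin (θ / 2) ^ 2 + exp (-r) * cos (θ / 2) ^ 2 := by
  have hcos : cos θ = cos (θ / 2) ^ 2 - sin (θ / 2) ^ 2 := by
    rw [← cos_two_mul', mul_div_cancel₀ θ two_ne_zero]
  rw [cosh_eq, sinh_eq, hcos]
  linear_combination (-(exp r + exp (-r)) / 2) * sin_sq_add_cos_sq (θ / 2)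

theorem cosh_sub_sinh_mul_cos_pos (r θ : ℝ) : 0 < cosh r - sinh r * cos θ := by
  rw [cosh_sub_sinh_mul_cos_eq]
  calc 0 < min (exp r) (exp (-r)) := lt_min (exp_pos r) (exp_pos (-r))
    _ = min (exp r) (exp (-r)) * (sin (θ / 2) ^ 2 + cos (θ / 2) ^ 2) := by
        rw [sin_sq_add_cos_sq, mul_one]
    _ ≤ exp r * sin (θ / 2) ^ 2 + exp (-r) * cos (θ / 2) ^ 2 := by
        rw [mul_add]
        gcongr
        exacts [min_le_left _ _, min_le_right _ _]

theorem cosh_sub_sinh_mul_cos_le_exp {r : ℝ} (hr : 0 ≤ r) (θ : ℝ) :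
    cosh r - sinh r * cos θ ≤ exp r := by
  have hexp : exp (-r) ≤ exp r := exp_le_exp.mpr (by linarith)
  calc cosh r - sinh r * cos θ
      = exp r * sin (θ / 2) ^ 2 + exp (-r) * cos (θ / 2) ^ 2 := cosh_sub_sinh_mul_cos_eq r θ
    _ ≤ exp r * sin (θ / 2) ^ 2 + exp r * cos (θ / 2) ^ 2 := by gcongr
    _ = exp r := by rw [← mul_add, sin_sq_add_cos_sq, mul_one]

theorem exp_mul_div_pi_sq_le_cosh_sub_sinh_mul_cos (r : ℝ) {θ : ℝ} (hθ₀ : 0 ≤ θ) (hθπ : θ ≤ π) :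
    exp r * (θ / π) ^ 2 ≤ cosh r - sinh r * cos θ := by
  have hsin : θ / π ≤ sin (θ / 2) := by
    have := mul_le_sin (x := θ / 2) (by positivity) (by linarith)
    rwa [show 2 / π * (θ / 2) = θ / π by ring] at this
  calc exp r * (θ / π) ^ 2 ≤ exp r * sin (θ / 2) ^ 2 := by gcongr
    _ ≤ exp r * sin (θ / 2) ^ 2 + exp (-r) * cos (θ / 2) ^ 2 := by
        simp only [le_add_iff_nonneg_right]
        positivity
    _ = cosh r - sinh r * cos θ := (cosh_sub_sinh_mul_cos_eq r θ).symm

theorem intervalIntegrable_div_rpow {p : ℝ} (hp : -1 < p) (c : ℝ) :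
    IntervalIntegrable (fun x => (x / c) ^ p) MeasureTheory.volume 0 c := by
  rcases eq_or_ne c 0 with rfl | hc
  · exact IntervalIntegrable.refl
  simpa [div_eq_mul_inv, hc] using
    (intervalIntegrable_rpow' (a := 0) (b := 1) hp).comp_mul_right (c := c⁻¹)

theorem integral_div_rpow {p : ℝ} (hp : -1 < p) (c : ℝ) :
    ∫ x in 0..c, (x / c) ^ p = c / (p + 1) := by
  rcases eq_or_ne c 0 with rfl | hc
  · simp
  rw [integral_comp_div (fun x => x ^ p) hc, zero_div, div_self hc, integral_rpow (Or.inl hp),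
    zero_rpow (by linarith), one_rpow, smul_eq_mul]
  ring

theorem continuous_cosh_sub_sinh_mul_cos_rpow (r s : ℝ) :
    Continuous fun θ => (cosh r - sinh r * cos θ) ^ s :=
  (by fun_prop : Continuous fun θ => cosh r - sinh r * cos θ).rpow_const
    fun θ => Or.inl (cosh_sub_sinh_mul_cos_pos r θ).ne'

theorem integral_cosh_sub_sinh_mul_cos_rpow_neg_le_of_nonneg (r : ℝ) {s : ℝ} (hs₀ : 0 ≤ s)
    (hs : s < 1 / 2) :
    ∫ θ in 0..π, (cosh r - sinh r * cos θ) ^ (-s) ≤ π / (1 - 2 * s) * exp (-s * r) := by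
  have hp : -1 < -2 * s := by linarith
  -- `Ioo`, not `Icc`: at `θ = 0` the majorant is the junk value `0 ^ p = 0` (for `p ≠ 0`).
  have hpointwise : ∀ θ ∈ Set.Ioo 0 π,
      (cosh r - sinh r * cos θ) ^ (-s) ≤ exp (-s * r) * (θ / π) ^ (-2 * s) := by
    rintro θ ⟨hθ₀, hθπ⟩
    calc (cosh r - sinh r * cos θ) ^ (-s)
        ≤ (exp r * (θ / π) ^ 2) ^ (-s) :=
          rpow_le_rpow_of_nonpos (by positivity)
            (exp_mul_div_pi_sq_le_cosh_sub_sinh_mul_cos r hθ₀.le hθπ.le) (by linarith)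
      _ = exp (-s * r) * (θ / π) ^ (-2 * s) := by
          rw [mul_rpow (exp_pos r).le (by positivity), ← exp_mul, ← rpow_natCast,
            ← rpow_mul (by positivity)]
          ring_nf
  calc ∫ θ in 0..π, (cosh r - sinh r * cos θ) ^ (-s)
      ≤ ∫ θ in 0..π, exp (-s * r) * (θ / π) ^ (-2 * s) :=
        integral_mono_on_of_le_Ioo pi_pos.le
          ((continuous_cosh_sub_sinh_mul_cos_rpow r _).intervalIntegrable _ _)
          ((intervalIntegrable_div_rpow hp π).const_mul _) hpointwise
    _ = π / (1 - 2 * s) * exp (-s * r) := by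
        rw [integral_const_mul, integral_div_rpow hp]
        ring_nf

theorem integral_cosh_sub_sinh_mul_cos_rpow_neg_le_of_nonpos {r s : ℝ} (hr : 0 ≤ r)
    (hs : s ≤ 0) :
    ∫ θ in 0..π, (cosh r - sinh r * cos θ) ^ (-s) ≤ π * exp (-s * r) := by
  have hpointwise : ∀ θ ∈ Set.Icc 0 π, (cosh r - sinh r * cos θ) ^ (-s) ≤ exp (-s * r) := by
    intro θ _
    calc (cosh r - sinh r * cos θ) ^ (-s)
        ≤ exp r ^ (-s) :=
          rpow_le_rpow (cosh_sub_sinh_mul_cos_pos r θ).le (cosh_sub_sinh_mul_cos_le_exp hr θ)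
            (by linarith)
      _ = exp (-s * r) := by rw [← exp_mul, mul_comm]
  calc ∫ θ in 0..π, (cosh r - sinh r * cos θ) ^ (-s)
      ≤ ∫ _ in 0..π, exp (-s * r) :=
        integral_mono_on pi_pos.le
          ((continuous_cosh_sub_sinh_mul_cos_rpow r _).intervalIntegrable _ _)
          intervalIntegrable_const hpointwise
    _ = π * exp (-s * r) := by rw [integral_const, smul_eq_mul, sub_zero]

theorem spherical_integral_bound :
    ∃ C : ℝ, 0 < C ∧
      ∀ ε : ℝ, 0 < ε → ε ≤ 1 →
        ∀ r : ℝ, 0 ≤ r →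
          (∫ θ in (0:ℝ)..Real.pi,
              (Real.cosh r - Real.sinh r * Real.cos θ) ^ (-(1/2 - ε) : ℝ)) ≤
            C * ε⁻¹ * Real.exp (-(1/2 - ε) * r) := by
  refine ⟨π, pi_pos, fun ε hε hε₁ r hr => ?_⟩
  rcases le_total 0 (1 / 2 - ε) with hs | hs
  · calc _ ≤ π / (1 - 2 * (1 / 2 - ε)) * exp (-(1 / 2 - ε) * r) :=
          integral_cosh_sub_sinh_mul_cos_rpow_neg_le_of_nonneg r hs (by linarith)
      _ = π / 2 * ε⁻¹ * exp (-(1 / 2 - ε) * r) := by field_simp; ring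
      _ ≤ π * ε⁻¹ * exp (-(1 / 2 - ε) * r) := by gcongr; linarith [pi_pos]
  · calc _ ≤ π * exp (-(1 / 2 - ε) * r) :=
          integral_cosh_sub_sinh_mul_cos_rpow_neg_le_of_nonpos hr hs
      _ ≤ π * ε⁻¹ * exp (-(1 / 2 - ε) * r) := by
          gcongr
          exact le_mul_of_one_le_right pi_pos.le ((one_le_inv₀ hε).mpr hε₁)
end

section
/- Let φ: ℝ → ℂ satisfy |φ̂(u)| ∼ (1+|u|)^{−α} for some α > 1/2 (i.e. there are constants 0 < c ≤ C with c·(1+|u|)^{−α} ≤ |φ̂(u)| ≤ C·(1+|u|)^{−α} for all u). Fix η ∈ (0,1) and p > 2. Then ∫₀^∞ y^{p/2} · |φ̂(η·log y)|^p · y^{−2} dy = ∞, while ∫₀^∞ y · |φ̂(η·log y)|^2 · y^{−2} dy < ∞. -/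
/-!
Substituting `y = exp u` turns the weight `y ^ s * y ^ (-2) dy` into `exp ((s - 1) u) du`. For
`s = 1` the integrand is `‖F (η u)‖ ^ 2 ≲ (1 + |η u|) ^ (-2α)`, integrable because `2α > 1`.
For `s = p / 2 > 1` it is at least `c ^ p * exp ((p / 2 - 1) u) * (1 + η u) ^ (-α p)` for `u ≥ 0`,
and the exponential beats the polynomial decay, so the integral diverges.
-/

open MeasureTheory Filter Real

lemma lintegral_Ioi_eq_lintegral_exp (g : ℝ → ENNReal) :
    ∫⁻ y in Set.Ioi (0:ℝ), g y = ∫⁻ u, ENNReal.ofReal (exp u) * g (exp u) := by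
  have h := lintegral_image_eq_lintegral_abs_det_fderiv_mul volume MeasurableSet.univ
    (f := exp) (f' := fun x => (1 : ℝ →L[ℝ] ℝ).smulRight (exp x))
    (fun x _ => (hasDerivAt_exp x).hasFDerivAt.hasFDerivWithinAt) exp_injective.injOn g
  rw [Set.image_univ, range_exp] at h
  rw [h]
  simp [abs_of_pos (exp_pos _), Measure.restrict_univ]

lemma lintegral_Ioi_rpow_mul_comp_log_mul_rpow_neg_two (s : ℝ) (G : ℝ → ℝ) :
    ∫⁻ y in Set.Ioi (0:ℝ), ENNReal.ofReal (y ^ s * G (log y) * y ^ (-2 : ℝ))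
      = ∫⁻ u, ENNReal.ofReal (exp ((s - 1) * u) * G u) := by
  rw [lintegral_Ioi_eq_lintegral_exp]
  refine lintegral_congr fun u => ?_
  rw [← ENNReal.ofReal_mul (exp_pos u).le, log_exp, ← exp_mul, ← exp_mul]
  congr 1
  rw [show (s - 1) * u = u + u * s + u * (-2) by ring, exp_add, exp_add]
  ring

lemma lintegral_ofReal_eq_top_of_tendsto_atTop {f : ℝ → ℝ} (hf : Tendsto f atTop atTop) :
    ∫⁻ u, ENNReal.ofReal (f u) = ⊤ := by
  obtain ⟨M, hM⟩ := eventually_atTop.1 (hf.eventually_ge_atTop 1)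
  refine eq_top_iff.2 ?_
  calc (⊤ : ENNReal) = ∫⁻ _ in Set.Ici M, 1 := by simp
    _ ≤ ∫⁻ u in Set.Ici M, ENNReal.ofReal (f u) :=
        setLIntegral_mono' measurableSet_Ici fun u hu => by simpa using hM u hu
    _ ≤ ∫⁻ u, ENNReal.ofReal (f u) := setLIntegral_le_lintegral _ _

lemma tendsto_exp_mul_mul_one_add_mul_rpow_neg_atTop {a b : ℝ} (ha : 0 < a) (hb : 0 < b)
    (s : ℝ) : Tendsto (fun u => exp (b * u) * (1 + a * u) ^ (-s)) atTop atTop := by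
  have hlin : Tendsto (fun u : ℝ => 1 + a * u) atTop atTop :=
    tendsto_atTop_add_const_left _ 1 (tendsto_id.const_mul_atTop ha)
  have h := ((tendsto_exp_mul_div_rpow_atTop s (b / a) (div_pos hb ha)).comp hlin).const_mul_atTop
    (exp_pos (-(b / a)))
  refine h.congr' ((hlin.eventually_gt_atTop 0).mono fun u hu => ?_)
  change exp (-(b / a)) * (exp (b / a * (1 + a * u)) / (1 + a * u) ^ s)
    = exp (b * u) * (1 + a * u) ^ (-s)
  rw [rpow_neg hu.le, mul_div_assoc', ← exp_add, div_eq_mul_inv]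
  congr 2
  field_simp
  ring

variable {E : Type*} [NormedAddCommGroup E]

lemma tendsto_exp_mul_mul_norm_comp_mul_rpow_atTop {F : ℝ → E} {α c η β p : ℝ} (hc : 0 < c)
    (hη : 0 < η) (hβ : 0 < β) (hp : 0 ≤ p)
    (hlow : ∀ u : ℝ, c * (1 + |u|) ^ (-α) ≤ ‖F u‖) :
    Tendsto (fun u => exp (β * u) * ‖F (η * u)‖ ^ p) atTop atTop := by
  refine tendsto_atTop_mono' _ ?_
    ((tendsto_exp_mul_mul_one_add_mul_rpow_neg_atTop hη hβ (α * p)).const_mul_atTop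
      (rpow_pos_of_pos hc p))
  filter_upwards [eventually_ge_atTop 0] with u hu
  have hηu : 0 ≤ η * u := mul_nonneg hη.le hu
  have hlow_u : c * (1 + η * u) ^ (-α) ≤ ‖F (η * u)‖ := by
    simpa only [abs_of_nonneg hηu] using hlow (η * u)
  calc c ^ p * (exp (β * u) * (1 + η * u) ^ (-(α * p)))
      = exp (β * u) * (c * (1 + η * u) ^ (-α)) ^ p := by
        rw [mul_rpow hc.le (by positivity), ← rpow_mul (by positivity), neg_mul]
        ring
    _ ≤ exp (β * u) * ‖F (η * u)‖ ^ p := by gcongr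

lemma lintegral_ofReal_norm_comp_mul_sq_lt_top {F : ℝ → E} {α C η : ℝ} (hα : 1 / 2 < α)
    (hη : η ≠ 0) (hup : ∀ u : ℝ, ‖F u‖ ≤ C * (1 + |u|) ^ (-α)) :
    ∫⁻ u, ENNReal.ofReal (‖F (η * u)‖ ^ 2) < ⊤ := by
  have hint : Integrable (fun v : ℝ => C ^ 2 * (1 + ‖v‖) ^ (-(2 * α))) :=
    (integrable_one_add_norm (by simp; linarith)).const_mul _
  refine lt_of_le_of_lt (lintegral_mono fun u => ENNReal.ofReal_le_ofReal ?_)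
    (hint.comp_mul_left' hη).lintegral_lt_top
  have h1 : (0 : ℝ) < 1 + |η * u| := by positivity
  calc ‖F (η * u)‖ ^ 2 ≤ (C * (1 + |η * u|) ^ (-α)) ^ 2 :=
        pow_le_pow_left₀ (norm_nonneg _) (hup _) 2
    _ = C ^ 2 * (1 + ‖η * u‖) ^ (-(2 * α)) := by
        rw [norm_eq_abs, show -(2 * α) = -α + -α by ring, rpow_add h1]
        ring

theorem cusp_example_L2_not_Lp_general (F : ℝ → ℂ)
    (α c C : ℝ) (hα : 1/2 < α) (hc : 0 < c)
    (hlow : ∀ u : ℝ, c * (1 + |u|) ^ (-α) ≤ ‖F u‖)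
    (hup : ∀ u : ℝ, ‖F u‖ ≤ C * (1 + |u|) ^ (-α))
    (η p : ℝ) (hη0 : 0 < η) (hp : 2 < p) :
    (∫⁻ y in Set.Ioi (0:ℝ),
        ENNReal.ofReal (y ^ (p/2) * ‖F (η * Real.log y)‖ ^ p * y ^ (-2 : ℝ)) = ⊤) ∧
    (∫⁻ y in Set.Ioi (0:ℝ),
        ENNReal.ofReal (y * ‖F (η * Real.log y)‖ ^ 2 * y ^ (-2 : ℝ)) < ⊤) := by
  constructor
  · rw [lintegral_Ioi_rpow_mul_comp_log_mul_rpow_neg_two (p / 2) fun u => ‖F (η * u)‖ ^ p]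
    exact lintegral_ofReal_eq_top_of_tendsto_atTop
      (tendsto_exp_mul_mul_norm_comp_mul_rpow_atTop hc hη0 (by linarith) (by linarith) hlow)
  · have h := lintegral_Ioi_rpow_mul_comp_log_mul_rpow_neg_two 1 fun u => ‖F (η * u)‖ ^ 2
    simp only [rpow_one, sub_self, zero_mul, exp_zero, one_mul] at h
    rw [h]
    exact lintegral_ofReal_norm_comp_mul_sq_lt_top hα hη0.ne' hup

theorem cusp_example_L2_not_Lp (φ : ℝ → ℂ) (F : ℝ → ℂ)
    (hF : F = FourierTransform.fourier φ)
    (α c C : ℝ) (hα : 1/2 < α) (hc : 0 < c) (hcC : c ≤ C)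
    (hlow : ∀ u : ℝ, c * (1 + |u|) ^ (-α) ≤ ‖F u‖)
    (hup : ∀ u : ℝ, ‖F u‖ ≤ C * (1 + |u|) ^ (-α))
    (η p : ℝ) (hη0 : 0 < η) (hη1 : η < 1) (hp : 2 < p) :
    (∫⁻ y in Set.Ioi (0:ℝ),
        ENNReal.ofReal (y ^ (p/2) * ‖F (η * Real.log y)‖ ^ p * y ^ (-2 : ℝ)) = ⊤) ∧
    (∫⁻ y in Set.Ioi (0:ℝ),
        ENNReal.ofReal (y * ‖F (η * Real.log y)‖ ^ 2 * y ^ (-2 : ℝ)) < ⊤) :=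
  cusp_example_L2_not_Lp_general F α c C hα hc hlow hup η p hη0 hp
end
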